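/- arXiv:2402.06324 — 2 statements merged into one kernel-verified Lean document; each statement's English description precedes it below -/
import Mathlib

section
/- Let X be a real Banach space and 0 < p < ∞. For a series ∑_i x_i in X, the following are equivalent: (1) ∑_i x_i is weakly unconditionally Cauchy; (2) S_{w_p}(∑ x_i) is complete; (3) c_0 ⊆ S_{w_p}(∑ x_i). -/
/-!
(1) ⇒ (2): the uniform boundedness principle, applied first on `X*` and then on `ℓ∞`, bounds the
partial-sum operators `a ↦ ∑_{i<n} a i • x i` on `ℓ∞` uniformly in `n`. Hence if `b k → a` in `ℓ∞`,
the partial sums of `b k` converge to those of `a` uniformly in `n`. Strong Cesàro limits pass to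
such uniform limits: two strongly Cesàro convergent sequences at uniform distance `δ` have limits
at distance `≤ δ`, so the limits form a Cauchy sequence. Thus `S_{w_p}` is closed in `ℓ∞`.

(2) ⇒ (3): finitely supported sequences lie in `S_{w_p}` and are dense in `c₀`.

(3) ⇒ (1): if `∑ |f (x i)| = ∞`, let `c n = ∑_{i<n} |f (x i)|` and
`a i = sign (f (x i)) / (1 + c i)`, a null sequence. Then
`f (∑_{i<n} a i • x i) ≥ log (1 + c n) → ∞` (Abel–Dini), so the partial sums eventually stay at
distance `≥ 1` from any `L`, whereas strong Cesàro convergence to `L` brings them within distance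
`1` of `L` infinitely often.
-/

open Filter Finset BoundedContinuousFunction

def StrongCesaro {X : Type*} [NormedAddCommGroup X] (p : ℝ) (x : ℕ → X) (L : X) : Prop :=
  Tendsto (fun n : ℕ => (n : ℝ)⁻¹ * ∑ k ∈ range n, ‖x k - L‖ ^ p) atTop (nhds 0)

/-- The `w_p`-summability space of a series, viewed inside `ℓ∞ = (ℕ →ᵇ ℝ)`. -/
def SwpSpace {X : Type*} [NormedAddCommGroup X] [NormedSpace ℝ X]
    (p : ℝ) (x : ℕ → X) : Set (ℕ →ᵇ ℝ) :=
  {a : ℕ →ᵇ ℝ | ∃ L : X, StrongCesaro p (fun n => ∑ i ∈ range n, a i • x i) L}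

open Topology

theorem frequently_lt_of_tendsto_cesaro_zero {c : ℕ → ℝ}
    (h : Tendsto (fun n : ℕ => (n : ℝ)⁻¹ * ∑ k ∈ range n, c k) atTop (𝓝 0))
    {ε : ℝ} (hε : 0 < ε) : ∃ᶠ n in atTop, c n < ε := by
  by_contra hfreq
  simp only [not_frequently, not_lt] at hfreq
  have hmin : Tendsto (fun n => min (c n) ε) atTop (𝓝 ε) :=
    tendsto_const_nhds.congr' (hfreq.mono fun n hn => (min_eq_right hn).symm)
  have : ε ≤ 0 := le_of_tendsto_of_tendsto' hmin.cesaro h fun n => by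
    gcongr
    exact min_le_left _ _
  linarith

theorem tendsto_zero_of_forall_le_add {ι : Type*} {l : Filter ι} {a : ι → ℝ} (ha : ∀ i, 0 ≤ a i)
    (h : ∀ ε > 0, ∃ b : ι → ℝ, Tendsto b l (𝓝 0) ∧ ∀ i, a i ≤ b i + ε) :
    Tendsto a l (𝓝 0) := by
  refine tendsto_order.2 ⟨fun δ hδ => .of_forall fun i => hδ.trans_le (ha i), fun δ hδ => ?_⟩
  obtain ⟨b, hb, hab⟩ := h (δ / 2) (half_pos hδ)
  filter_upwards [hb.eventually (gt_mem_nhds (half_pos hδ))] with i hi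
  linarith [hab i]

theorem Real.add_rpow_le_two_rpow_mul_rpow_add_rpow {a b p : ℝ} (ha : 0 ≤ a) (hb : 0 ≤ b)
    (hp : 0 ≤ p) : (a + b) ^ p ≤ 2 ^ p * (a ^ p + b ^ p) := calc
  (a + b) ^ p ≤ (2 * max a b) ^ p := by
    rw [two_mul]; gcongr; exacts [le_max_left _ _, le_max_right _ _]
  _ = 2 ^ p * max a b ^ p := Real.mul_rpow zero_le_two (ha.trans (le_max_left _ _))
  _ ≤ 2 ^ p * (a ^ p + b ^ p) := by
    gcongr
    rcases le_total a b with hab | hab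
    · rw [max_eq_right hab]; exact le_add_of_nonneg_left (by positivity)
    · rw [max_eq_left hab]; exact le_add_of_nonneg_right (by positivity)

theorem cesaro_rpow_le_of_le_add {a b : ℕ → ℝ} {p η : ℝ} (ha : ∀ i, 0 ≤ a i) (hb : ∀ i, 0 ≤ b i)
    (hp : 0 ≤ p) (hη : 0 ≤ η) (h : ∀ i, a i ≤ b i + η) (n : ℕ) :
    (n : ℝ)⁻¹ * ∑ i ∈ range n, a i ^ p ≤
      2 ^ p * ((n : ℝ)⁻¹ * ∑ i ∈ range n, b i ^ p) + 2 ^ p * η ^ p := by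
  have hn : (n : ℝ)⁻¹ * n ≤ 1 := by
    rcases n.eq_zero_or_pos with rfl | hn
    · simp
    · rw [inv_mul_cancel₀ (by positivity)]
  calc (n : ℝ)⁻¹ * ∑ i ∈ range n, a i ^ p
      ≤ (n : ℝ)⁻¹ * ∑ i ∈ range n, 2 ^ p * (b i ^ p + η ^ p) := by
        gcongr with i
        exact (Real.rpow_le_rpow (ha i) (h i) hp).trans
          (Real.add_rpow_le_two_rpow_mul_rpow_add_rpow (hb i) hη hp)
    _ = 2 ^ p * ((n : ℝ)⁻¹ * ∑ i ∈ range n, b i ^ p) + (n : ℝ)⁻¹ * n * (2 ^ p * η ^ p) := by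
        simp only [mul_add, sum_add_distrib, ← mul_sum, sum_const, card_range, nsmul_eq_mul]
        ring
    _ ≤ 2 ^ p * ((n : ℝ)⁻¹ * ∑ i ∈ range n, b i ^ p) + 2 ^ p * η ^ p :=
        add_le_add_right (mul_le_of_le_one_left (by positivity) hn) _

theorem Real.log_one_add_sum_le_sum_div {d : ℕ → ℝ} (hd : ∀ i, 0 ≤ d i) (n : ℕ) :
    Real.log (1 + ∑ i ∈ range n, d i) ≤ ∑ i ∈ range n, d i / (1 + ∑ j ∈ range i, d j) := by
  induction n with
  | zero => simp
  | succ n ih =>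
    have hD : 0 < 1 + ∑ i ∈ range n, d i := by
      linarith [sum_nonneg fun i (_ : i ∈ range n) => hd i]
    have hD' : 0 < 1 + ∑ i ∈ range n, d i + d n := by linarith [hd n]
    have hstep : Real.log (1 + ∑ i ∈ range n, d i + d n) - Real.log (1 + ∑ i ∈ range n, d i) ≤
        d n / (1 + ∑ j ∈ range n, d j) := by
      rw [← Real.log_div hD'.ne' hD.ne']
      refine (Real.log_le_sub_one_of_pos (div_pos hD' hD)).trans_eq ?_
      field_simp
      ring
    rw [sum_range_succ, sum_range_succ, ← add_assoc]
    linarith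

theorem tendsto_sum_div_one_add_sum_atTop {d : ℕ → ℝ} (hd : ∀ i, 0 ≤ d i) (h : ¬Summable d) :
    Tendsto (fun n => ∑ i ∈ range n, d i / (1 + ∑ j ∈ range i, d j)) atTop atTop :=
  tendsto_atTop_mono (Real.log_one_add_sum_le_sum_div hd) <| Real.tendsto_log_atTop.comp <|
    tendsto_atTop_add_const_left _ 1 ((not_summable_iff_tendsto_nat_atTop_of_nonneg hd).1 h)

namespace StrongCesaro

variable {X : Type*} [NormedAddCommGroup X] {p : ℝ} {u v : ℕ → X} {L M : X}

theorem frequently_norm_sub_lt (hp : 0 < p) (h : StrongCesaro p u L) {ε : ℝ} (hε : 0 < ε) :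
    ∃ᶠ n in atTop, ‖u n - L‖ < ε :=
  (frequently_lt_of_tendsto_cesaro_zero h (Real.rpow_pos_of_pos hε p)).mono fun _ hn =>
    (Real.rpow_lt_rpow_iff (norm_nonneg _) hε.le hp).1 hn

theorem frequently_norm_sub_lt_and (hp : 0 < p) (hu : StrongCesaro p u L)
    (hv : StrongCesaro p v M) {ε : ℝ} (hε : 0 < ε) :
    ∃ᶠ n in atTop, ‖u n - L‖ < ε ∧ ‖v n - M‖ < ε := by
  have hsum : Tendsto
      (fun n : ℕ => (n : ℝ)⁻¹ * ∑ k ∈ range n, (‖u k - L‖ ^ p + ‖v k - M‖ ^ p)) atTop (𝓝 0) := by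
    simpa [sum_add_distrib, mul_add] using hu.add hv
  refine (frequently_lt_of_tendsto_cesaro_zero hsum (Real.rpow_pos_of_pos hε p)).mono
    fun n hn => ?_
  have hu' : 0 ≤ ‖u n - L‖ ^ p := by positivity
  have hv' : 0 ≤ ‖v n - M‖ ^ p := by positivity
  exact ⟨(Real.rpow_lt_rpow_iff (norm_nonneg _) hε.le hp).1 (by linarith),
    (Real.rpow_lt_rpow_iff (norm_nonneg _) hε.le hp).1 (by linarith)⟩

theorem dist_le (hp : 0 < p) (hu : StrongCesaro p u L) (hv : StrongCesaro p v M) {δ : ℝ}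
    (h : ∀ n, dist (u n) (v n) ≤ δ) : dist L M ≤ δ := by
  refine le_of_forall_pos_lt_add fun ε hε => ?_
  obtain ⟨n, hun, hvn⟩ := (hu.frequently_norm_sub_lt_and hp hv (half_pos hε)).exists
  rw [← dist_eq_norm] at hun hvn
  calc dist L M ≤ dist L (u n) + dist (u n) (v n) + dist (v n) M := dist_triangle4 _ _ _ _
    _ < δ + ε := by rw [dist_comm L]; linarith [h n]

theorem of_eventually_eq (hp : 0 < p) (h : ∀ᶠ n in atTop, u n = L) : StrongCesaro p u L :=
  Tendsto.cesaro <| tendsto_const_nhds.congr' <| h.mono fun n hn => by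
    simp [hn, Real.zero_rpow hp.ne']

theorem exists_of_tendstoUniformly [CompleteSpace X] (hp : 0 < p) {F : ℕ → ℕ → X} {Λ : ℕ → X}
    (hF : ∀ k, StrongCesaro p (F k) (Λ k)) (hFu : TendstoUniformly F u atTop) :
    ∃ L, StrongCesaro p u L := by
  have hΛ : CauchySeq Λ := by
    refine Metric.cauchySeq_iff'.2 fun ε hε => ?_
    obtain ⟨N, hN⟩ :=
      (Metric.tendstoUniformly_iff.1 hFu (ε / 3) (by positivity)).exists_forall_of_atTop
    refine ⟨N, fun k hk => ?_⟩
    have := (hF k).dist_le hp (hF N) (δ := 2 * ε / 3) fun n =>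
      (dist_triangle_left _ _ (u n)).trans (by linarith [hN k hk n, hN N le_rfl n])
    linarith
  obtain ⟨L, hL⟩ := cauchySeq_tendsto_of_complete hΛ
  refine ⟨L, tendsto_zero_of_forall_le_add (fun n => by positivity) fun ε hε => ?_⟩
  set η := (ε / 2 ^ p) ^ p⁻¹
  have hη : 0 < η := by positivity
  have hηp : 2 ^ p * η ^ p = ε := by
    rw [Real.rpow_inv_rpow (by positivity) hp.ne']
    field_simp
  obtain ⟨k, hkF, hkΛ⟩ : ∃ k, (∀ n, dist (u n) (F k n) < η / 2) ∧ dist (Λ k) L < η / 2 :=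
    ((Metric.tendstoUniformly_iff.1 hFu _ (half_pos hη)).and
      (Metric.tendsto_nhds.1 hL _ (half_pos hη))).exists
  refine ⟨fun n => 2 ^ p * ((n : ℝ)⁻¹ * ∑ i ∈ range n, ‖F k i - Λ k‖ ^ p),
    by simpa using (hF k).const_mul (2 ^ p), fun n => ?_⟩
  rw [← hηp]
  refine cesaro_rpow_le_of_le_add (fun _ => norm_nonneg _) (fun _ => norm_nonneg _) hp.le hη.le
    (fun i => ?_) n
  simp only [← dist_eq_norm] at *
  linarith [dist_triangle4 (u i) (F k i) (Λ k) L, hkF i]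

end StrongCesaro

section WeaklyUnconditionallyCauchy

variable {X : Type*} [NormedAddCommGroup X] [NormedSpace ℝ X]

theorem exists_norm_le_of_forall_dual_bounded {ι : Type*} {y : ι → X}
    (h : ∀ f : StrongDual ℝ X, ∃ C, ∀ i, |f (y i)| ≤ C) : ∃ C, ∀ i, ‖y i‖ ≤ C := by
  obtain ⟨C, hC⟩ := banach_steinhaus (g := fun i => NormedSpace.inclusionInDoubleDualLi ℝ (y i))
    fun f => h f
  exact ⟨C, fun i => by simpa only [LinearIsometry.norm_map] using hC i⟩

noncomputable def partialSumCLM (x : ℕ → X) (n : ℕ) : (ℕ →ᵇ ℝ) →L[ℝ] X :=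
  ∑ i ∈ range n, (evalCLM ℝ i).smulRight (x i)

@[simp]
theorem partialSumCLM_apply (x : ℕ → X) (n : ℕ) (a : ℕ →ᵇ ℝ) :
    partialSumCLM x n a = ∑ i ∈ range n, a i • x i := by
  simp [partialSumCLM]

theorem exists_norm_partialSumCLM_le {x : ℕ → X}
    (hx : ∀ f : X →L[ℝ] ℝ, Summable fun i => |f (x i)|) :
    ∃ C, ∀ n, ‖partialSumCLM x n‖ ≤ C := by
  refine banach_steinhaus fun a => exists_norm_le_of_forall_dual_bounded fun f =>
    ⟨‖a‖ * ∑' i, |f (x i)|, fun n => ?_⟩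
  calc |f (partialSumCLM x n a)| ≤ ∑ i ∈ range n, |a i| * |f (x i)| := by
        simpa [abs_mul] using abs_sum_le_sum_abs (fun i => a i * f (x i)) (range n)
    _ ≤ ∑ i ∈ range n, ‖a‖ * |f (x i)| := by
        gcongr with i
        exact norm_coe_le_norm a i
    _ ≤ ‖a‖ * ∑' i, |f (x i)| := by
        rw [← mul_sum]
        exact mul_le_mul_of_nonneg_left ((hx f).sum_le_tsum _ fun i _ => abs_nonneg _)
          (norm_nonneg a)

theorem isClosed_swpSpace [CompleteSpace X] {p : ℝ} (hp : 0 < p) {x : ℕ → X}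
    (hx : ∀ f : X →L[ℝ] ℝ, Summable fun i => |f (x i)|) : IsClosed (SwpSpace p x) := by
  obtain ⟨C, hC⟩ := exists_norm_partialSumCLM_le hx
  refine IsSeqClosed.isClosed fun b a hb hba => ?_
  choose Λ hΛ using hb
  refine StrongCesaro.exists_of_tendstoUniformly hp hΛ
    (Metric.tendstoUniformly_iff.2 fun ε hε => ?_)
  have hCb : Tendsto (fun k => C * dist (b k) a) atTop (𝓝 0) := by
    simpa using ((tendsto_iff_dist_tendsto_zero.1 hba).const_mul C)
  filter_upwards [hCb.eventually (gt_mem_nhds hε)] with k hk n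
  calc dist (∑ i ∈ range n, a i • x i) (∑ i ∈ range n, b k i • x i)
      = ‖partialSumCLM x n (a - b k)‖ := by simp [dist_eq_norm, sub_smul]
    _ ≤ C * dist (b k) a := by
        rw [dist_comm, dist_eq_norm]
        exact ((partialSumCLM x n).le_opNorm _).trans
          (mul_le_mul_of_nonneg_right (hC n) (norm_nonneg _))
    _ < ε := hk

theorem exists_strongCesaro_of_tendsto_zero {p : ℝ} (hp : 0 < p) {x : ℕ → X}
    (hclosed : IsClosed (SwpSpace p x)) {a : ℕ → ℝ} (ha : Tendsto a atTop (𝓝 0)) :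
    ∃ L, StrongCesaro p (fun n => ∑ i ∈ range n, a i • x i) L := by
  obtain ⟨C, hC⟩ := ha.norm.bddAbove_range
  let A : ℕ →ᵇ ℝ :=
    ofNormedAddCommGroup a continuous_of_discreteTopology C fun i => hC ⟨i, rfl⟩
  let B : ℕ → ℕ →ᵇ ℝ := fun k => ofNormedAddCommGroup ((range k : Set ℕ).indicator a)
    continuous_of_discreteTopology C fun i =>
      (norm_indicator_le_norm_self _ _).trans (hC ⟨i, rfl⟩)
  have hB : ∀ k, B k ∈ SwpSpace p x := fun k => ⟨∑ i ∈ range k, a i • x i,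
    StrongCesaro.of_eventually_eq hp <| eventually_atTop.2 ⟨k, fun n hn => by
      simp only [B, coe_ofNormedAddCommGroup, ← Set.indicator_smul_apply_left]
      exact sum_indicator_subset (fun i => a i • x i) (range_subset_range.2 hn)⟩⟩
  have hBA : Tendsto B atTop (𝓝 A) := by
    refine tendsto_iff_tendstoUniformly.2 (Metric.tendstoUniformly_iff.2 fun ε hε => ?_)
    obtain ⟨N, hN⟩ := Metric.tendsto_atTop.1 ha ε hε
    filter_upwards [eventually_ge_atTop N] with k hk i
    by_cases hi : i < k
    · simp [A, B, hi, hε]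
    · simpa [A, B, hi, Real.dist_eq] using hN i (hk.trans (not_lt.1 hi))
  exact show A ∈ SwpSpace p x from hclosed.mem_of_tendsto hBA (.of_forall hB)

theorem summable_abs_of_forall_tendsto_zero {p : ℝ} (hp : 0 < p) {x : ℕ → X}
    (h : ∀ a : ℕ → ℝ, Tendsto a atTop (𝓝 0) →
      ∃ L : X, StrongCesaro p (fun n => ∑ i ∈ range n, a i • x i) L)
    (f : X →L[ℝ] ℝ) : Summable fun i => |f (x i)| := by
  by_contra hf
  set c : ℕ → ℝ := fun n => ∑ i ∈ range n, |f (x i)|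
  have hc : Tendsto (fun i => (1 + c i)⁻¹) atTop (𝓝 0) :=
    tendsto_inv_atTop_zero.comp <| tendsto_atTop_add_const_left _ 1 <|
      (not_summable_iff_tendsto_nat_atTop_of_nonneg fun i => abs_nonneg _).1 hf
  obtain ⟨L, hL⟩ := h (fun i => SignType.sign (f (x i)) * (1 + c i)⁻¹) <|
    squeeze_zero_norm (fun i => by
      rw [norm_mul, Real.norm_of_nonneg (by positivity : 0 ≤ (1 + c i)⁻¹)]
      refine mul_le_of_le_one_left (by positivity) ?_
      rcases SignType.sign (f (x i)) with _ | _ | _ <;> simp) hc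
  set S : ℕ → X := fun n => ∑ i ∈ range n, (SignType.sign (f (x i)) * (1 + c i)⁻¹) • x i
  have hfS : ∀ n, f (S n) = ∑ i ∈ range n, |f (x i)| / (1 + c i) := fun n => by
    simp only [S, map_sum, map_smul, smul_eq_mul]
    refine sum_congr rfl fun i _ => ?_
    rw [mul_comm, ← mul_assoc, self_mul_sign, div_eq_mul_inv]
  obtain ⟨n, hn, hnL⟩ := ((tendsto_sum_div_one_add_sum_atTop (fun i => abs_nonneg _) hf
    |>.eventually_gt_atTop (f L + ‖f‖)).and_frequently
      (hL.frequently_norm_sub_lt hp one_pos)).exists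
  have hfSL : f (S n) - f L ≤ ‖f‖ := calc
    f (S n) - f L = f (S n - L) := (map_sub f _ _).symm
    _ ≤ ‖f (S n - L)‖ := le_abs_self _
    _ ≤ ‖f‖ * ‖S n - L‖ := f.le_opNorm _
    _ ≤ ‖f‖ := mul_le_of_le_one_right (norm_nonneg f) hnL.le
  linarith [hfS n]

end WeaklyUnconditionallyCauchy

theorem statement11 {X : Type*} [NormedAddCommGroup X] [NormedSpace ℝ X] [CompleteSpace X]
    (p : ℝ) (hp : 0 < p) (x : ℕ → X) :
    List.TFAE
      [∀ f : X →L[ℝ] ℝ, Summable fun i => |f (x i)|,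
       IsComplete (SwpSpace p x),
       ∀ a : ℕ → ℝ, Tendsto a atTop (nhds 0) →
         ∃ L : X, StrongCesaro p (fun n => ∑ i ∈ range n, a i • x i) L] := by
  tfae_have 1 → 2 := fun h => (isClosed_swpSpace hp h).isComplete
  tfae_have 2 → 3 := fun h _ => exists_strongCesaro_of_tendsto_zero hp h.isClosed
  tfae_have 3 → 1 := summable_abs_of_forall_tendsto_zero hp
  tfae_finish
end

section
/- Let X be a real Banach space and ∑_i x_i a series in X such that ∑_i |f(x_i)| = +∞ for some f ∈ X*. Then there exists a sequence (a_i) ∈ c_0 with a_i f(x_i) ≥ 0 for all i and ∑_i a_i f(x_i) = +∞; consequently the partial sums ∑_{i=1}^n a_i x_i are not strongly p-Cesàro summable for any 0 < p < ∞. -/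
/-!
Dividing `|f (x i)|` by `√(1 + T (i+1))`, where `T n = ∑_{i<n} |f (x i)|` diverges, is an
Abel–Dini construction: the weights tend to `0`, yet the weighted sum dominates the telescoping
sum of `√(1 + T (i+1)) - √(1 + T i)`, which diverges. Choosing the signs of `f (x i)` makes
`f (S n) → ∞` for the partial sums `S n = ∑_{i<n} a i • x i`, hence `‖S n - L‖ → ∞`, and a
Cesàro mean of a sequence tending to infinity cannot tend to `0`.
-/

open Filter Finset

open Topology

lemma Real.sqrt_sub_sqrt_le_div_sqrt {u v : ℝ} (hu : 0 ≤ u) (huv : u ≤ v) :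
    √v - √u ≤ (v - u) / √v := by
  rcases (Real.sqrt_nonneg v).eq_or_lt with hv | hv
  · have hv0 : v ≤ 0 := Real.sqrt_eq_zero'.mp hv.symm
    simp [← hv, Real.sqrt_eq_zero'.mpr (huv.trans hv0)]
  rw [le_div_iff₀ hv]
  have hsuv : √u ≤ √v := Real.sqrt_le_sqrt huv
  nlinarith [Real.mul_self_sqrt hu, Real.mul_self_sqrt (hu.trans huv), Real.sqrt_nonneg u]

theorem exists_tendsto_zero_tendsto_sum_mul_atTop {g : ℕ → ℝ} (hg : ∀ i, 0 ≤ g i)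
    (hgs : ¬ Summable g) :
    ∃ c : ℕ → ℝ, (∀ i, 0 < c i) ∧ Tendsto c atTop (𝓝 0) ∧
      Tendsto (fun n => ∑ i ∈ range n, g i * c i) atTop atTop := by
  set T : ℕ → ℝ := fun n => ∑ i ∈ range n, g i
  set s : ℕ → ℝ := fun n => √(1 + T n)
  have hT0 : ∀ n, 0 ≤ T n := fun n => sum_nonneg fun i _ => hg i
  have hs0 : ∀ n, 0 < s n := fun n => Real.sqrt_pos.mpr (by linarith [hT0 n])
  have hs : Tendsto s atTop atTop := Real.tendsto_sqrt_atTop.comp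
    (tendsto_atTop_add_const_left _ 1 ((not_summable_iff_tendsto_nat_atTop_of_nonneg hg).mp hgs))
  refine ⟨fun i => (s (i + 1))⁻¹, fun i => inv_pos.mpr (hs0 _),
    (hs.comp (tendsto_add_atTop_nat 1)).inv_tendsto_atTop, ?_⟩
  have hstep : ∀ i, s (i + 1) - s i ≤ g i * (s (i + 1))⁻¹ := fun i => by
    have hTs : T (i + 1) = T i + g i := sum_range_succ g i
    calc s (i + 1) - s i ≤ ((1 + T (i + 1)) - (1 + T i)) / s (i + 1) :=
          Real.sqrt_sub_sqrt_le_div_sqrt (by linarith [hT0 i]) (by linarith [hg i])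
      _ = g i * (s (i + 1))⁻¹ := by rw [hTs, div_eq_mul_inv]; ring
  have hbound : ∀ n, s n - 1 ≤ ∑ i ∈ range n, g i * (s (i + 1))⁻¹ := fun n => by
    have hs_zero : s 0 = 1 := by simp [s, T]
    calc s n - 1 = ∑ i ∈ range n, (s (i + 1) - s i) := by rw [sum_range_sub, hs_zero]
      _ ≤ _ := sum_le_sum fun i _ => hstep i
  exact tendsto_atTop_mono hbound (tendsto_atTop_add_const_right _ (-1) hs)

theorem exists_tendsto_zero_nonneg_mul_tendsto_sum_mul_atTop {y : ℕ → ℝ}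
    (hy : ¬ Summable fun i => |y i|) :
    ∃ a : ℕ → ℝ, Tendsto a atTop (𝓝 0) ∧ (∀ i, 0 ≤ a i * y i) ∧
      Tendsto (fun n => ∑ i ∈ range n, a i * y i) atTop atTop := by
  obtain ⟨c, hc0, hc, hsum⟩ :=
    exists_tendsto_zero_tendsto_sum_mul_atTop (fun i => abs_nonneg (y i)) hy
  have hay : ∀ i, SignType.sign (y i) * c i * y i = |y i| * c i := fun i => by
    rw [mul_right_comm, sign_mul_self]
  refine ⟨fun i => SignType.sign (y i) * c i, ?_, fun i => ?_, ?_⟩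
  · refine squeeze_zero_norm (fun i => ?_) hc
    rw [norm_mul, Real.norm_eq_abs, Real.norm_eq_abs, abs_of_pos (hc0 i)]
    exact mul_le_of_le_one_left (hc0 i).le (by rcases SignType.sign (y i) with _ | _ | _ <;> simp)
  · rw [hay]; exact mul_nonneg (abs_nonneg _) (hc0 i).le
  · simpa only [hay] using hsum

lemma ContinuousLinearMap.tendsto_norm_atTop_of_tendsto_apply_atTop {E ι : Type*}
    [SeminormedAddCommGroup E] [NormedSpace ℝ E] (f : E →L[ℝ] ℝ) {y : ι → E} {l : Filter ι}
    (h : Tendsto (fun i => f (y i)) l atTop) : Tendsto (fun i => ‖y i‖) l atTop := by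
  have hf : 0 < ‖f‖ + 1 := by positivity
  refine tendsto_atTop_mono (fun i => ?_) (h.atTop_div_const hf)
  rw [div_le_iff₀ hf]
  calc f (y i) ≤ ‖f‖ * ‖y i‖ := (le_abs_self _).trans (f.le_opNorm (y i))
    _ ≤ ‖y i‖ * (‖f‖ + 1) := by nlinarith [norm_nonneg (y i)]

lemma not_strongCesaro_of_tendsto_norm_sub_atTop {X : Type*} [NormedAddCommGroup X] {p : ℝ}
    (hp : 0 < p) {x : ℕ → X} {L : X} (h : Tendsto (fun n => ‖x n - L‖) atTop atTop) :
    ¬ StrongCesaro p x L := by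
  intro hx
  set u : ℕ → ℝ := fun k => ‖x k - L‖ ^ p
  -- `min (u k) 1` is eventually `1`, so its Cesàro means tend to `1` yet are bounded by those of `u`.
  have hmin : Tendsto (fun k => min (u k) 1) atTop (𝓝 1) :=
    tendsto_const_nhds.congr' <| ((tendsto_rpow_atTop hp).comp h).eventually_ge_atTop 1
      |>.mono fun k hk => (min_eq_right hk).symm
  refine absurd (le_of_tendsto_of_tendsto' hmin.cesaro hx fun n => ?_) (by norm_num)
  exact mul_le_mul_of_nonneg_left (sum_le_sum fun k _ => min_le_left _ _) (by positivity)

theorem statement19_general {X : Type*} [NormedAddCommGroup X] [NormedSpace ℝ X]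
    (x : ℕ → X) (f : X →L[ℝ] ℝ) (hf : ¬ Summable fun i => |f (x i)|) :
    ∃ a : ℕ → ℝ, Tendsto a atTop (nhds 0) ∧
      (∀ i, 0 ≤ a i * f (x i)) ∧
      Tendsto (fun n : ℕ => ∑ i ∈ range n, a i * f (x i)) atTop atTop ∧
      ∀ p : ℝ, 0 < p → ∀ L : X,
        ¬ StrongCesaro p (fun n => ∑ i ∈ range n, a i • x i) L := by
  obtain ⟨a, ha, hnonneg, hsum⟩ := exists_tendsto_zero_nonneg_mul_tendsto_sum_mul_atTop hf
  refine ⟨a, ha, hnonneg, hsum, fun p hp L => ?_⟩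
  have hfS : Tendsto (fun n => f (∑ i ∈ range n, a i • x i - L)) atTop atTop := by
    simpa only [map_sub, map_sum, map_smul, smul_eq_mul, ← sub_eq_add_neg] using
      tendsto_atTop_add_const_right _ (-f L) hsum
  exact not_strongCesaro_of_tendsto_norm_sub_atTop hp
    (f.tendsto_norm_atTop_of_tendsto_apply_atTop hfS)

theorem statement19 {X : Type*} [NormedAddCommGroup X] [NormedSpace ℝ X] [CompleteSpace X]
    (x : ℕ → X) (f : X →L[ℝ] ℝ) (hf : ¬ Summable fun i => |f (x i)|) :
    ∃ a : ℕ → ℝ, Tendsto a atTop (nhds 0) ∧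
      (∀ i, 0 ≤ a i * f (x i)) ∧
      Tendsto (fun n : ℕ => ∑ i ∈ range n, a i * f (x i)) atTop atTop ∧
      ∀ p : ℝ, 0 < p → ∀ L : X,
        ¬ StrongCesaro p (fun n => ∑ i ∈ range n, a i • x i) L :=
  statement19_general x f hf
end
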